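/- An unfolding step preserves logical consequence: if clauses c₁ = (H ← φ ∧ B₁ ∧ … ∧ A ∧ … ∧ Bₖ) and c₂ = (A' ← φ' ∧ C₁ ∧ … ∧ Cₘ) are valid in an interpretation I (viewing clauses as universally quantified implications over valuations), then the clause obtained by unfolding c₁ with c₂ on atom A (replacing A by the body of c₂ together with the equality of arguments) is also valid in I. -/

import Mathlib

/-- A CHC over predicate symbols `P`, valuations `V` and argument tuples `T`:
a head atom, a body constraint, and a list of body atoms.  An atom is a pair of
a predicate symbol and a function extracting its argument tuple from a
valuation. -/
structure Clause (P V T : Type*) where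
  head : P × (V → T)
  constr : V → Prop
  body : List (P × (V → T))

/-- A clause is valid in interpretation `I` if for all valuations, the truth of
the constraint and all body atoms implies truth of the head. -/
def valid {P V T : Type*} (I : P → T → Prop) (c : Clause P V T) : Prop :=
  ∀ v, c.constr v → (∀ a ∈ c.body, I a.1 (a.2 v)) → I c.head.1 (c.head.2 v)

/-- An unfolding step preserves logical consequence: if `c₁` and `c₂` are valid
in `I`, and the selected body atom `(q, s)` of `c₁` is replaced by the body of
`c₂` (whose head is `(q, s')`), adding the argument equality `s = s'` to the
constraint, then the resulting clause is valid in `I`. -/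
theorem unfold_preserves_validity {P V T : Type*} (I : P → T → Prop)
    (c₁ c₂ : Clause P V T) (h₁ : valid I c₁) (h₂ : valid I c₂)
    (q : P) (s : V → T)
    (pre post : List (P × (V → T)))
    (hbody : c₁.body = pre ++ (q, s) :: post)
    (hhead : c₂.head.1 = q) :
    valid I ⟨c₁.head,
             fun v => c₁.constr v ∧ c₂.constr v ∧ s v = c₂.head.2 v,
             pre ++ c₂.body ++ post⟩ := by
  intro v ⟨hc₁, hc₂, hs⟩ hb
  simp only [List.forall_mem_append] at hb
  obtain ⟨⟨hpre, hbody₂⟩, hpost⟩ := hb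
  -- the head of `c₂` is the selected atom `(q, s)` once `s v = c₂.head.2 v`
  have hselected : I q (s v) := hhead ▸ hs ▸ h₂ v hc₂ hbody₂
  refine h₁ v hc₁ ?_
  rw [hbody]
  simp only [List.forall_mem_append, List.forall_mem_cons]
  exact ⟨hpre, hselected, hpost⟩
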